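/- arXiv:2304.01652 — 2 statements merged into one kernel-verified Lean document; each statement's English description precedes it below -/
import Mathlib

section
/- Under the setup of the symbolic model with cells of centers c_{x̂} and quantization η, B L-Lipschitz, Ŝ = {x̂ | B(c_{x̂}) - L·η_max/2 ≥ 0}: if for every x̂ ∈ Ŝ there exists an admissible input û such that min_{x̂' ∈ F̂(x̂,û)} [B(c_{x̂'}) - B(c_{x̂})] ≥ -α(B(c_{x̂}) - L·η_max/2), where α is 𝒦∞ with α(r) < r for r > 0, then Ŝ is controlled invariant for the transition system F̂: for every x̂ ∈ Ŝ there is û with F̂(x̂,û) ⊆ Ŝ. -/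
lemma le_self_of_map_zero_of_lt_self {α : ℝ → ℝ} (hα0 : α 0 = 0)
    (hα_lt : ∀ r > (0:ℝ), α r < r) {r : ℝ} (hr : 0 ≤ r) : α r ≤ r := by
  rcases hr.eq_or_lt with rfl | hpos
  · exact hα0.le
  · exact (hα_lt r hpos).le

lemma nonneg_of_sub_ge_neg_map {α : ℝ → ℝ} (hα0 : α 0 = 0)
    (hα_lt : ∀ r > (0:ℝ), α r < r) {a b : ℝ} (ha : 0 ≤ a) (hab : b - a ≥ -α a) :
    0 ≤ b := by
  linarith [le_self_of_map_zero_of_lt_self hα0 hα_lt ha]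

theorem stmt4_general {n : ℕ} {Xh Uh : Type*}
    (Fh : Xh → Uh → Set Xh)
    (c : Xh → (Fin n → ℝ)) (B : (Fin n → ℝ) → ℝ)
    (L : ℝ) (ηmax : ℝ)
    (α : ℝ → ℝ)
    (hα0 : α 0 = 0)
    (hα_lt : ∀ r > (0:ℝ), α r < r)
    (Sh : Set Xh) (hSh : Sh = {xh : Xh | B (c xh) - L * ηmax / 2 ≥ 0})
    (hbarrier : ∀ xh ∈ Sh, ∃ uh : Uh, (Fh xh uh).Nonempty ∧
      ∀ xh' ∈ Fh xh uh, B (c xh') - B (c xh) ≥ -α (B (c xh) - L * ηmax / 2)) :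
    ∀ xh ∈ Sh, ∃ uh : Uh, Fh xh uh ⊆ Sh := by
  subst hSh
  intro xh hxh
  obtain ⟨uh, -, hdecrease⟩ := hbarrier xh hxh
  refine ⟨uh, fun xh' hxh' => ?_⟩
  exact nonneg_of_sub_ge_neg_map hα0 hα_lt (a := B (c xh) - L * ηmax / 2) hxh
    (by linarith [hdecrease xh' hxh'])

/-- the symbolic barrier condition implies controlled invariance of
the symbolic safe set for the symbolic transition system. -/
theorem stmt4 {n : ℕ} {Xh Uh : Type*}
    (Fh : Xh → Uh → Set Xh)
    (c : Xh → (Fin n → ℝ)) (B : (Fin n → ℝ) → ℝ)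
    (L : ℝ) (ηmax : ℝ) (hηmax : 0 < ηmax)
    (α : ℝ → ℝ)
    (hα_cont : Continuous α) (hα_mono : StrictMonoOn α (Set.Ici 0))
    (hα0 : α 0 = 0) (hα_nonneg : ∀ r ≥ (0:ℝ), α r ≥ 0)
    (hα_unbounded : Filter.Tendsto α Filter.atTop Filter.atTop)
    (hα_lt : ∀ r > (0:ℝ), α r < r)
    (Sh : Set Xh) (hSh : Sh = {xh : Xh | B (c xh) - L * ηmax / 2 ≥ 0})
    (hbarrier : ∀ xh ∈ Sh, ∃ uh : Uh, (Fh xh uh).Nonempty ∧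
      ∀ xh' ∈ Fh xh uh, B (c xh') - B (c xh) ≥ -α (B (c xh) - L * ηmax / 2)) :
    ∀ xh ∈ Sh, ∃ uh : Uh, Fh xh uh ⊆ Sh :=
  stmt4_general Fh c B L ηmax α hα0 hα_lt Sh hSh hbarrier
end

section
/- Given two relations Q₁ ⊆ X₁ × X̂₁ and Q₂ ⊆ X₂ × X̂₂ that are feedback refinement relations from transition systems Σ₁ to Σ̂₁ and Σ₂ to Σ̂₂ respectively, the product relation Q = {((x₁,x₂),(x̂₁,x̂₂)) | (x₁,x̂₁) ∈ Q₁, (x₂,x̂₂) ∈ Q₂} is a feedback refinement relation from the product transition system Σ₁ × Σ₂ to Σ̂₁ × Σ̂₂. -/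
/-- A feedback refinement relation from the transition system `(X,U,F)` to the
transition system `(Xh,U,Fh)`. -/
def IsFRR {X Xh U : Type*} (F : X → U → Set X) (Fh : Xh → U → Set Xh)
    (Q : X → Xh → Prop) : Prop :=
  (∀ x, ∃ xh, Q x xh) ∧
  ∀ x xh, Q x xh →
    ((∀ u, (Fh xh u).Nonempty → (F x u).Nonempty) ∧
     (∀ u, (Fh xh u).Nonempty →
       ∀ x' ∈ F x u, ∀ xh', Q x' xh' → xh' ∈ Fh xh u))

namespace IsFRR

variable {X Xh U : Type*} {F : X → U → Set X} {Fh : Xh → U → Set Xh} {Q : X → Xh → Prop}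

theorem exists_rel (h : IsFRR F Fh Q) (x : X) : ∃ xh, Q x xh :=
  h.1 x

theorem nonempty_of_nonempty (h : IsFRR F Fh Q) {x : X} {xh : Xh} (hq : Q x xh) {u : U}
    (hu : (Fh xh u).Nonempty) : (F x u).Nonempty :=
  (h.2 x xh hq).1 u hu

theorem mem_of_rel (h : IsFRR F Fh Q) {x : X} {xh : Xh} (hq : Q x xh) {u : U}
    (hu : (Fh xh u).Nonempty) {x' : X} (hx' : x' ∈ F x u) {xh' : Xh} (hq' : Q x' xh') :
    xh' ∈ Fh xh u :=
  (h.2 x xh hq).2 u hu x' hx' xh' hq'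

end IsFRR

/-- the product of two feedback refinement relations is a feedback
refinement relation between the product transition systems. -/
theorem stmt6 {X₁ Xh₁ U₁ X₂ Xh₂ U₂ : Type*}
    (F₁ : X₁ → U₁ → Set X₁) (Fh₁ : Xh₁ → U₁ → Set Xh₁) (Q₁ : X₁ → Xh₁ → Prop)
    (F₂ : X₂ → U₂ → Set X₂) (Fh₂ : Xh₂ → U₂ → Set Xh₂) (Q₂ : X₂ → Xh₂ → Prop)
    (h₁ : IsFRR F₁ Fh₁ Q₁) (h₂ : IsFRR F₂ Fh₂ Q₂) :
    IsFRR (fun (x : X₁ × X₂) (u : U₁ × U₂) => F₁ x.1 u.1 ×ˢ F₂ x.2 u.2)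
          (fun (xh : Xh₁ × Xh₂) (u : U₁ × U₂) => Fh₁ xh.1 u.1 ×ˢ Fh₂ xh.2 u.2)
          (fun x xh => Q₁ x.1 xh.1 ∧ Q₂ x.2 xh.2) := by
  refine ⟨fun x => ?strict, fun x xh hq =>
    ⟨fun u hu => ?inputs, fun u hu x' hx' xh' hq' => ?succ⟩⟩
  case strict =>
    obtain ⟨xh₁, hq₁⟩ := h₁.exists_rel x.1
    obtain ⟨xh₂, hq₂⟩ := h₂.exists_rel x.2
    exact ⟨(xh₁, xh₂), hq₁, hq₂⟩
  case inputs =>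
    rw [Set.prod_nonempty_iff] at hu ⊢
    exact ⟨h₁.nonempty_of_nonempty hq.1 hu.1, h₂.nonempty_of_nonempty hq.2 hu.2⟩
  case succ =>
    rw [Set.prod_nonempty_iff] at hu
    exact ⟨h₁.mem_of_rel hq.1 hu.1 hx'.1 hq'.1, h₂.mem_of_rel hq.2 hu.2 hx'.2 hq'.2⟩
end
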